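/- arXiv:2201.02159 — 7 statements merged into one kernel-verified Lean document; each statement's English description precedes it below -/
import Mathlib

section
/- Every function of bounded variation g : [a,b] → ℝ has a finitely permeable graph: for every y ∈ ℝ and δ > 0 there exists a function f : [a,b] → ℝ with f(a) = f(b) = y, total variation of f over [a,b] strictly less than δ, and such that the set {t ∈ [a,b] : f(t) = g(t)} is finite. -/
/-!
Take `f` equal to `y` at `a` and `b` and to a constant `c` on `(a, b)`, with `|c - y| < δ / 2`.
Its variation is at most `2 |c - y| < δ`, and `f = g` only at `a`, `b` and on the level set
`g⁻¹{c} ∩ [a, b]`, so it suffices to find such a `c` whose level set is finite.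

This is the finiteness half of Banach's indicatrix theorem. Cut `[a, b]` into cells of mesh `h`
and count the cells whose image under `g` has closure containing `c`. The image of a cell has
measure at most the variation of `g` on it, so this count has integral at most `V(g)`. If
`g⁻¹{c}` is infinite the count tends to infinity as `h → 0`, hence by Fatou's lemma almost every
level set is finite.
-/

open Set MeasureTheory Filter
open scoped ENNReal

section Variation

variable {α E : Type*} [LinearOrder α] [PseudoEMetricSpace E]

theorem eVariationOn_sum_inter_Icc_le (f : α → E) (s : Set α) {x : ℕ → α} (hx : Monotone x)
    (K : ℕ) :
    ∑ j ∈ Finset.range K, eVariationOn f (s ∩ Icc (x j) (x (j + 1))) ≤ eVariationOn f s := by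
  suffices h : ∑ j ∈ Finset.range K, eVariationOn f (s ∩ Icc (x j) (x (j + 1)))
      ≤ eVariationOn f (s ∩ Iic (x K)) from h.trans (eVariationOn.mono f inter_subset_left)
  induction K with
  | zero => simp
  | succ K ih =>
    calc ∑ j ∈ Finset.range (K + 1), eVariationOn f (s ∩ Icc (x j) (x (j + 1)))
        ≤ eVariationOn f (s ∩ Iic (x K)) + eVariationOn f (s ∩ Icc (x K) (x (K + 1))) := by
          rw [Finset.sum_range_succ]; gcongr
      _ ≤ eVariationOn f (s ∩ Iic (x K) ∪ s ∩ Icc (x K) (x (K + 1))) :=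
          eVariationOn.add_le_union f fun _ ht _ ht' => ht.2.trans ht'.2.1
      _ ≤ eVariationOn f (s ∩ Iic (x (K + 1))) := by
          refine eVariationOn.mono f (union_subset ?_ ?_)
          · exact inter_subset_inter_right _ (Iic_subset_Iic.2 (hx K.le_succ))
          · exact inter_subset_inter_right _ Icc_subset_Iic_self

theorem ediam_image_le_eVariationOn (f : α → E) (s : Set α) :
    Metric.ediam (f '' s) ≤ eVariationOn f s :=
  Metric.ediam_le <| by
    rintro _ ⟨x, hx, rfl⟩ _ ⟨y, hy, rfl⟩
    exact eVariationOn.edist_le f hx hy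

theorem volume_closure_image_le_eVariationOn (f : α → ℝ) (s : Set α) :
    volume (closure (f '' s)) ≤ eVariationOn f s :=
  calc volume (closure (f '' s)) ≤ Metric.ediam (closure (f '' s)) := Real.volume_le_diam _
    _ = Metric.ediam (f '' s) := Metric.ediam_closure _
    _ ≤ eVariationOn f s := ediam_image_le_eVariationOn f s

end Variation

theorem eVariationOn_Icc_le_of_eqOn_Ioo {E : Type*} [PseudoEMetricSpace E] {f : ℝ → E}
    {a b : ℝ} {c : E} (hf : EqOn f (fun _ => c) (Ioo a b)) :
    eVariationOn f (Icc a b) ≤ edist (f a) c + edist c (f b) := by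
  rcases le_or_gt b a with hba | hab
  · simp [subsingleton_Icc_of_ge hba]
  set m := (a + b) / 2
  have ham : a < m := left_lt_add_div_two.2 hab
  have hmb : m < b := add_div_two_lt_right.2 hab
  have hm : f m = c := hf ⟨ham, hmb⟩
  -- `φ` collapses `Icc a b` monotonically onto `{a, m, b}` without changing `f`
  set φ : ℝ → ℝ := fun t => if t = a then a else if t = b then b else m
  have hφ : MonotoneOn φ (Icc a b) := by
    intro s hs t ht hst
    simp only [φ]
    split_ifs <;> grind
  have hφmaps : MapsTo φ (Icc a b) ({a, m} ∪ {m, b}) := by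
    intro t _
    simp only [φ]
    split_ifs <;> simp
  have hfφ : EqOn (f ∘ φ) f (Icc a b) := by
    intro t ht
    simp only [φ, Function.comp_apply]
    split_ifs with h1 h2
    · rw [h1]
    · rw [h2]
    · rw [hm, hf ⟨lt_of_le_of_ne ht.1 (Ne.symm h1), lt_of_le_of_ne ht.2 h2⟩]
  calc eVariationOn f (Icc a b) = eVariationOn (f ∘ φ) (Icc a b) := (eVariationOn.congr hfφ).symm
    _ ≤ eVariationOn f ({a, m} ∪ {m, b}) := eVariationOn.comp_le_of_monotoneOn f φ hφ hφmaps
    _ = edist (f a) c + edist c (f b) := by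
      rw [eVariationOn.union f (x := m), eVariationOn.pair, eVariationOn.pair, hm]
      · exact ⟨by simp, by simp [upperBounds]; linarith⟩
      · exact ⟨by simp, by simp [lowerBounds]; linarith⟩

theorem mem_Ico_floor_div {a h t : ℝ} (hh : 0 < h) (ht : a ≤ t) :
    t ∈ Ico (a + ⌊(t - a) / h⌋₊ * h) (a + (⌊(t - a) / h⌋₊ + 1 : ℕ) * h) := by
  have hlow := Nat.floor_le (div_nonneg (sub_nonneg.2 ht) hh.le)
  have hupp := Nat.lt_floor_add_one ((t - a) / h)
  rw [le_div_iff₀ hh] at hlow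
  rw [div_lt_iff₀ hh] at hupp
  constructor <;> push_cast <;> linarith

/-- A discretization at mesh `h` of Banach's indicatrix `c ↦ #(g⁻¹{c} ∩ [a, b])`. -/
noncomputable def discreteIndicatrix (g : ℝ → ℝ) (a b h c : ℝ) : ℝ≥0∞ :=
  ∑ j ∈ Finset.range (⌊(b - a) / h⌋₊ + 1),
    (closure (g '' (Icc a b ∩ Icc (a + j * h) (a + (j + 1 : ℕ) * h)))).indicator 1 c

section discreteIndicatrix

variable {g : ℝ → ℝ} {a b h : ℝ}

theorem measurable_discreteIndicatrix : Measurable (discreteIndicatrix g a b h) :=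
  Finset.measurable_sum _ fun _ _ => measurable_one.indicator isClosed_closure.measurableSet

theorem lintegral_discreteIndicatrix_le (hh : 0 ≤ h) :
    ∫⁻ c, discreteIndicatrix g a b h c ≤ eVariationOn g (Icc a b) := by
  have hx : Monotone fun j : ℕ => a + j * h := fun i j hij => by dsimp only; gcongr
  unfold discreteIndicatrix
  rw [lintegral_finsetSum _ fun _ _ => measurable_one.indicator isClosed_closure.measurableSet]
  simp_rw [lintegral_indicator_one isClosed_closure.measurableSet]
  exact (Finset.sum_le_sum fun j _ => volume_closure_image_le_eVariationOn g _).trans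
    (eVariationOn_sum_inter_Icc_le g _ hx _)

theorem natCast_card_le_discreteIndicatrix (hh : 0 < h) {c : ℝ} {S : Finset ℝ}
    (hS : ∀ t ∈ S, t ∈ Icc a b ∧ g t = c)
    (hsep : ∀ t ∈ S, ∀ t' ∈ S, t ≠ t' → h ≤ |t - t'|) :
    (S.card : ℝ≥0∞) ≤ discreteIndicatrix g a b h c := by
  classical
  set cell : ℕ → Set ℝ := fun j => Icc a b ∩ Icc (a + j * h) (a + (j + 1 : ℕ) * h)
  have hcount : discreteIndicatrix g a b h c =
      ((Finset.range (⌊(b - a) / h⌋₊ + 1)).filter (fun j => c ∈ closure (g '' cell j))).card := by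
    simp only [discreteIndicatrix, Finset.natCast_card_filter, indicator_apply, Pi.one_apply, cell]
  rw [hcount, Nat.cast_le]
  refine Finset.card_le_card_of_injOn (fun t => ⌊(t - a) / h⌋₊) ?_ ?_
  · intro t ht
    obtain ⟨htab, hgt⟩ := hS t ht
    refine Finset.mem_filter.2 ⟨Finset.mem_range.2 (Nat.lt_succ_of_le ?_), ?_⟩
    · exact Nat.floor_le_floor (div_le_div_of_nonneg_right (by linarith [htab.2]) hh.le)
    · exact subset_closure ⟨t, ⟨htab, Ico_subset_Icc_self (mem_Ico_floor_div hh htab.1)⟩, hgt⟩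
  · intro t ht t' ht' hidx
    by_contra hne
    have h1 := mem_Ico_floor_div hh (hS t ht).1.1
    have h2 := mem_Ico_floor_div hh (hS t' ht').1.1
    simp only at hidx
    rw [hidx] at h1
    push_cast at h1 h2
    exact (hsep t ht t' ht' hne).not_gt
      (abs_sub_lt_iff.2 ⟨by linarith [h1.2, h2.1], by linarith [h1.1, h2.2]⟩)

theorem eventually_natCast_le_discreteIndicatrix {c : ℝ}
    (hinf : {t ∈ Icc a b | g t = c}.Infinite) (n : ℕ) :
    ∀ᶠ k : ℕ in atTop, (n : ℝ≥0∞) ≤ discreteIndicatrix g a b (1 / (k + 1)) c := by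
  obtain ⟨S, hSsub, rfl⟩ := hinf.exists_subset_card_eq n
  have hsep : ∀ᶠ k : ℕ in atTop, ∀ t ∈ S, ∀ t' ∈ S, t ≠ t' → 1 / ((k : ℝ) + 1) ≤ |t - t'| := by
    simp only [eventually_all_finset]
    intro t _ t' _
    by_cases htt' : t = t'
    · exact Eventually.of_forall fun _ h => absurd htt' h
    · filter_upwards [tendsto_one_div_add_atTop_nhds_zero_nat.eventually
        (gt_mem_nhds (abs_pos.2 (sub_ne_zero.2 htt')))] with k hk _ using hk.le
  filter_upwards [hsep] with k hk
  exact natCast_card_le_discreteIndicatrix Nat.one_div_pos_of_nat (fun t ht => hSsub ht) hk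

end discreteIndicatrix

theorem BoundedVariationOn.ae_finite_levelSet {g : ℝ → ℝ} {a b : ℝ}
    (hg : BoundedVariationOn g (Icc a b)) : ∀ᵐ c, {t ∈ Icc a b | g t = c}.Finite := by
  set N : ℕ → ℝ → ℝ≥0∞ := fun k => discreteIndicatrix g a b (1 / (k + 1))
  have hN : ∀ k, Measurable (N k) := fun _ => measurable_discreteIndicatrix
  have hfatou : ∫⁻ c, liminf (fun k => N k c) atTop < ∞ :=
    calc ∫⁻ c, liminf (fun k => N k c) atTop ≤ liminf (fun k => ∫⁻ c, N k c) atTop :=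
          lintegral_liminf_le hN
      _ ≤ eVariationOn g (Icc a b) := liminf_le_of_frequently_le' <| Frequently.of_forall
          fun _ => lintegral_discreteIndicatrix_le Nat.one_div_pos_of_nat.le
      _ < ∞ := hg.lt_top
  filter_upwards [ae_lt_top (Measurable.liminf hN) hfatou.ne] with c hc
  by_contra hinf
  refine hc.ne (ENNReal.eq_top_of_forall_nnreal_le fun r => ?_)
  calc (r : ℝ≥0∞) ≤ (⌈r⌉₊ : ℝ≥0∞) := mod_cast Nat.le_ceil r
    _ ≤ liminf (fun k => N k c) atTop :=
      le_liminf_of_le (h := eventually_natCast_le_discreteIndicatrix hinf _)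

theorem bounded_variation_finitely_permeable_graph_general
    (a b : ℝ) (g : ℝ → ℝ)
    (hg : BoundedVariationOn g (Set.Icc a b)) :
    ∀ y : ℝ, ∀ δ : ℝ, 0 < δ →
      ∃ f : ℝ → ℝ, f a = y ∧ f b = y ∧
        eVariationOn f (Set.Icc a b) < ENNReal.ofReal δ ∧
        {t ∈ Set.Icc a b | f t = g t}.Finite := by
  intro y δ hδ
  obtain ⟨c, hcy, hc⟩ := Measure.exists_mem_of_measure_ne_zero_of_ae
    (by simpa using hδ : volume (Metric.ball y (δ / 2)) ≠ 0)
    (ae_restrict_of_ae hg.ae_finite_levelSet)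
  set f : ℝ → ℝ := fun t => if t ∈ Ioo a b then c else y
  have hfa : f a = y := by simp [f]
  have hfb : f b = y := by simp [f]
  have hf : EqOn f (fun _ => c) (Ioo a b) := fun t ht => if_pos ht
  refine ⟨f, hfa, hfb, ?_, ?_⟩
  · calc eVariationOn f (Icc a b) ≤ edist y c + edist c y := by
          simpa only [hfa, hfb] using eVariationOn_Icc_le_of_eqOn_Ioo hf
      _ < ENNReal.ofReal δ := by
          rw [edist_comm y c, ← two_mul, edist_dist, ← ENNReal.ofReal_ofNat 2,
            ← ENNReal.ofReal_mul zero_le_two]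
          exact (ENNReal.ofReal_lt_ofReal_iff hδ).2 (by linarith [Metric.mem_ball.1 hcy])
  · refine (hc.union (toFinite {a, b})).subset fun t ⟨ht, hft⟩ => ?_
    by_cases hto : t ∈ Ioo a b
    · exact Or.inl ⟨ht, (hf hto).symm.trans hft |>.symm⟩
    · exact Or.inr (by grind)

/-- Every function of bounded variation on `[a,b]` has a finitely
permeable graph. -/
theorem bounded_variation_finitely_permeable_graph
    (a b : ℝ) (hab : a ≤ b) (g : ℝ → ℝ)
    (hg : BoundedVariationOn g (Set.Icc a b)) :
    ∀ y : ℝ, ∀ δ : ℝ, 0 < δ →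
      ∃ f : ℝ → ℝ, f a = y ∧ f b = y ∧
        eVariationOn f (Set.Icc a b) < ENNReal.ofReal δ ∧
        {t ∈ Set.Icc a b | f t = g t}.Finite :=
  bounded_variation_finitely_permeable_graph_general a b g hg
end

section
/- For a function g : [a,b] → ℝ of bounded variation, the level set g⁻¹({z}) is finite for Lebesgue-almost every z ∈ ℝ. -/
open Set MeasureTheory Filter
open scoped ENNReal

/-!
For a partition of `[a, b]`, the number of cells whose image under `g` has `z` in its convex hull
integrates in `z` to at most the sum of the oscillations of `g` over the cells, hence to at most
the total variation. As the mesh of the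
uniform partitions tends to zero, any `k` distinct solutions of `g x = z` eventually lie in `k`
distinct cells, so the `liminf` of these counts dominates the size of the level set. By Fatou's
lemma this `liminf` has finite integral, so it is finite almost everywhere.
-/

/-- A discretization of Banach's indicatrix `z ↦ #g⁻¹(z)` along the partition `t 0 ≤ ⋯ ≤ t n`. -/
noncomputable def partitionIndicatrix (g : ℝ → ℝ) (t : ℕ → ℝ) (n : ℕ) (z : ℝ) : ℝ≥0∞ :=
  ∑ i ∈ Finset.range n, (convexHull ℝ (g '' Icc (t i) (t (i + 1)))).indicator 1 z

theorem Real.measurableSet_convexHull (s : Set ℝ) : MeasurableSet (convexHull ℝ s) :=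
  (convex_convexHull ℝ s).ordConnected.measurableSet

section partitionIndicatrix

variable (g : ℝ → ℝ) (t : ℕ → ℝ) (n : ℕ)

theorem measurable_partitionIndicatrix : Measurable (partitionIndicatrix g t n) :=
  Finset.measurable_sum _ fun _ _ => measurable_const.indicator (Real.measurableSet_convexHull _)

theorem volume_convexHull_image_le_eVariationOn (s : Set ℝ) :
    volume (convexHull ℝ (g '' s)) ≤ eVariationOn g s :=
  calc volume (convexHull ℝ (g '' s)) ≤ Metric.ediam (convexHull ℝ (g '' s)) :=
        Real.volume_le_diam _
    _ = Metric.ediam (g '' s) := convexHull_ediam _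
    _ ≤ eVariationOn g s := Metric.ediam_le <| by
      rintro _ ⟨x, hx, rfl⟩ _ ⟨y, hy, rfl⟩
      exact eVariationOn.edist_le g hx hy

theorem lintegral_partitionIndicatrix_le (ht : Monotone t) :
    ∫⁻ z, partitionIndicatrix g t n z ≤ eVariationOn g (Icc (t 0) (t n)) := by
  unfold partitionIndicatrix
  rw [← eVariationOn.sum' g ht, lintegral_finsetSum _ fun i _ =>
    (measurable_const.indicator (Real.measurableSet_convexHull _) : Measurable
      ((convexHull ℝ (g '' Icc (t i) (t (i + 1)))).indicator 1))]
  gcongr with i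
  rw [lintegral_indicator_one (Real.measurableSet_convexHull _)]
  exact volume_convexHull_image_le_eVariationOn g _

variable {g t n}

theorem card_le_partitionIndicatrix {z : ℝ} {T : Finset ℝ} (hT : ∀ x ∈ T, g x = z) {φ : ℝ → ℕ}
    (hφn : ∀ x ∈ T, φ x < n) (hφ : ∀ x ∈ T, x ∈ Icc (t (φ x)) (t (φ x + 1))) (hinj : InjOn φ T) :
    (T.card : ℝ≥0∞) ≤ partitionIndicatrix g t n z := by
  classical
  calc (T.card : ℝ≥0∞)
    _ = ∑ x ∈ T, (convexHull ℝ (g '' Icc (t (φ x)) (t (φ x + 1)))).indicator 1 z := by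
      rw [Finset.card_eq_sum_ones, Nat.cast_sum, Nat.cast_one]
      refine Finset.sum_congr rfl fun x hx => ?_
      have hz : z ∈ convexHull ℝ (g '' Icc (t (φ x)) (t (φ x + 1))) :=
        subset_convexHull ℝ _ ⟨x, hφ x hx, hT x hx⟩
      rw [indicator_of_mem hz, Pi.one_apply]
    _ = ∑ i ∈ T.image φ, (convexHull ℝ (g '' Icc (t i) (t (i + 1)))).indicator 1 z := by
      rw [Finset.sum_image hinj]
    _ ≤ partitionIndicatrix g t n z := Finset.sum_le_sum_of_subset fun i hi => by
      obtain ⟨x, hx, rfl⟩ := Finset.mem_image.1 hi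
      exact Finset.mem_range.2 (hφn x hx)

end partitionIndicatrix

noncomputable def uniformPartition (a b : ℝ) (n i : ℕ) : ℝ := a + i * ((b - a) / n)

noncomputable def uniformPartitionIndex (a b : ℝ) (n : ℕ) (x : ℝ) : ℕ :=
  min ⌊(x - a) / ((b - a) / n)⌋₊ (n - 1)

section uniformPartition

variable {a b : ℝ} {n : ℕ}

@[simp]
theorem uniformPartition_zero : uniformPartition a b n 0 = a := by
  simp [uniformPartition]

theorem uniformPartition_self (hn : n ≠ 0) : uniformPartition a b n n = b := by
  rw [uniformPartition, mul_div_cancel₀ _ (Nat.cast_ne_zero.2 hn)]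
  ring

theorem uniformPartition_succ (i : ℕ) :
    uniformPartition a b n (i + 1) = uniformPartition a b n i + (b - a) / n := by
  simp only [uniformPartition]
  push_cast
  ring

theorem monotone_uniformPartition (hab : a ≤ b) : Monotone (uniformPartition a b n) :=
  fun i j hij => by
    unfold uniformPartition
    gcongr

theorem uniformPartitionIndex_lt (hn : n ≠ 0) (x : ℝ) : uniformPartitionIndex a b n x < n :=
  (min_le_right _ _).trans_lt (Nat.sub_lt (Nat.pos_of_ne_zero hn) one_pos)

theorem mem_Icc_uniformPartition_index (hab : a < b) (hn : n ≠ 0) {x : ℝ} (hx : x ∈ Icc a b) :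
    x ∈ Icc (uniformPartition a b n (uniformPartitionIndex a b n x))
      (uniformPartition a b n (uniformPartitionIndex a b n x + 1)) := by
  set h := (b - a) / n
  have hh : 0 < h := div_pos (sub_pos.2 hab) (Nat.cast_pos.2 (Nat.pos_of_ne_zero hn))
  set k := ⌊(x - a) / h⌋₊
  have hk : (k : ℝ) * h ≤ x - a :=
    (le_div_iff₀ hh).1 (Nat.floor_le (div_nonneg (sub_nonneg.2 hx.1) hh.le))
  constructor
  · calc uniformPartition a b n (uniformPartitionIndex a b n x)
        ≤ uniformPartition a b n k := monotone_uniformPartition hab.le (min_le_left _ _)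
      _ ≤ x := by rw [uniformPartition]; linarith
  · rcases le_or_gt (n - 1) k with hlast | hk'
    · rw [uniformPartitionIndex, min_eq_right hlast, Nat.sub_add_cancel (Nat.pos_of_ne_zero hn),
        uniformPartition_self hn]
      exact hx.2
    · have : x - a < (k + 1) * h := (div_lt_iff₀ hh).1 (Nat.lt_floor_add_one _)
      rw [uniformPartitionIndex, min_eq_left hk'.le, uniformPartition]
      push_cast
      linarith

theorem abs_sub_le_of_uniformPartitionIndex_eq (hab : a < b) (hn : n ≠ 0) {x y : ℝ}
    (hx : x ∈ Icc a b) (hy : y ∈ Icc a b)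
    (hxy : uniformPartitionIndex a b n x = uniformPartitionIndex a b n y) :
    |x - y| ≤ (b - a) / n := by
  have hx' := mem_Icc_uniformPartition_index hab hn hx
  have hy' := mem_Icc_uniformPartition_index hab hn hy
  rw [hxy, uniformPartition_succ] at hx'
  rw [uniformPartition_succ] at hy'
  rw [abs_le]
  constructor <;> linarith [hx'.1, hx'.2, hy'.1, hy'.2]

theorem eventually_injOn_uniformPartitionIndex (hab : a < b) {T : Set ℝ} (hT : T.Finite)
    (hTab : T ⊆ Icc a b) : ∀ᶠ n in atTop, InjOn (uniformPartitionIndex a b n) T := by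
  have hpairs : ∀ p ∈ (T ×ˢ T) ∩ {p | p.1 ≠ p.2},
      ∀ᶠ n : ℕ in atTop, n ≠ 0 ∧ (b - a) / n < |p.1 - p.2| :=
    fun p hp => (eventually_ne_atTop 0).and <|
      (tendsto_const_div_atTop_nhds_zero_nat (b - a)).eventually
        (gt_mem_nhds (abs_pos.2 (sub_ne_zero.2 hp.2)))
  filter_upwards [((hT.prod hT).inter_of_left _).eventually_all.2 hpairs] with n hn x hx y hy hxy
  by_contra hne
  obtain ⟨hn0, hlt⟩ := hn (x, y) ⟨⟨hx, hy⟩, hne⟩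
  exact hlt.not_ge (abs_sub_le_of_uniformPartitionIndex_eq hab hn0 (hTab hx) (hTab hy) hxy)

end uniformPartition

theorem card_le_liminf_partitionIndicatrix_uniformPartition {a b : ℝ} (hab : a < b)
    {g : ℝ → ℝ} {z : ℝ} {T : Finset ℝ} (hT : ↑T ⊆ {x ∈ Icc a b | g x = z}) :
    (T.card : ℝ≥0∞) ≤
      liminf (fun n => partitionIndicatrix g (uniformPartition a b n) n z) atTop := by
  refine le_liminf_of_le (by isBoundedDefault) ?_
  filter_upwards [eventually_ne_atTop 0, eventually_injOn_uniformPartitionIndex hab T.finite_toSet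
    fun x hx => (hT hx).1] with n hn hinj
  exact card_le_partitionIndicatrix (fun x hx => (hT hx).2)
    (fun x _ => uniformPartitionIndex_lt hn x)
    (fun x hx => mem_Icc_uniformPartition_index hab hn (hT hx).1) hinj

theorem ae_liminf_lt_top_of_lintegral_le {α : Type*} [MeasurableSpace α] {μ : Measure α}
    {f : ℕ → α → ℝ≥0∞} (hf : ∀ n, Measurable (f n)) {C : ℝ≥0∞} (hC : C ≠ ∞)
    (hfC : ∀ n, ∫⁻ x, f n x ∂μ ≤ C) : ∀ᵐ x ∂μ, liminf (fun n => f n x) atTop < ∞ := by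
  refine ae_lt_top (.liminf hf) (ne_top_of_le_ne_top hC ?_)
  calc ∫⁻ x, liminf (fun n => f n x) atTop ∂μ
      ≤ liminf (fun n => ∫⁻ x, f n x ∂μ) atTop := lintegral_liminf_le hf
    _ ≤ C := liminf_le_of_frequently_le' (.of_forall hfC)

/-- consequence of Banach's indicatrix theorem. For a function of
bounded variation on `[a,b]`, the level set `g⁻¹({z})` is finite for Lebesgue-a.e. `z`. -/
theorem bounded_variation_level_sets_ae_finite
    (a b : ℝ) (g : ℝ → ℝ) (hg : BoundedVariationOn g (Set.Icc a b)) :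
    ∀ᵐ z ∂(volume : Measure ℝ), {t ∈ Set.Icc a b | g t = z}.Finite := by
  rcases le_or_gt b a with hba | hab
  · exact .of_forall fun z => ((subsingleton_Icc_of_ge hba).anti (sep_subset _ _)).finite
  have hint (n : ℕ) : ∫⁻ z, partitionIndicatrix g (uniformPartition a b n) n z ≤
      eVariationOn g (Icc a b) := by
    rcases eq_or_ne n 0 with rfl | hn
    · simp [partitionIndicatrix]
    · simpa [uniformPartition_self hn] using lintegral_partitionIndicatrix_le g
        (uniformPartition a b n) n (monotone_uniformPartition hab.le)
  filter_upwards [ae_liminf_lt_top_of_lintegral_le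
    (fun n => measurable_partitionIndicatrix g _ n) hg hint] with z hz
  obtain ⟨K, hK⟩ := ENNReal.exists_nat_gt hz.ne
  by_contra hinf
  obtain ⟨T, hT, rfl⟩ := Set.Infinite.exists_subset_card_eq hinf K
  exact (card_le_liminf_partitionIndicatrix_uniformPartition hab hT).not_gt hK
end

section
/- Every polynomial function g : [a,b] → ℝ has a finitely permeable graph: for all y ∈ ℝ and δ > 0 there exists a function f : [a,b] → ℝ with f(a) = f(b) = y, total variation less than δ, and only finitely many points of intersection with g. -/
/-!
If `p` is not the constant `y`, the constant function `y` meets the graph of `p` only at roots of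
the nonzero polynomial `p - y`. If `p = y`, a low tent `y + ε · min (t - a) (b - t)` over `[a, b]`
meets it only at the endpoints, and being `ε`-Lipschitz it has variation at most `ε (b - a)`.
-/

open Set
open scoped ENNReal NNReal

theorem LipschitzOnWith.eVariationOn_Icc_le {E : Type*} [PseudoEMetricSpace E] {f : ℝ → E}
    {C : ℝ≥0} {a b : ℝ} (hf : LipschitzOnWith C f (Icc a b)) :
    eVariationOn f (Icc a b) ≤ C * ENNReal.ofReal (b - a) := by
  simpa using hf.comp_eVariationOn_le (g := id) (mapsTo_id _)

theorem eVariationOn_const {α E : Type*} [LinearOrder α] [PseudoEMetricSpace E] (s : Set α)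
    (c : E) : eVariationOn (fun _ : α => c) s = 0 :=
  eVariationOn.constant_on (subsingleton_singleton.anti (image_subset_iff.2 fun _ _ => rfl))

theorem exists_eVariationOn_lt_forall_ne_of_mem_Ioo {a b : ℝ} (hab : a ≤ b) (y : ℝ)
    {δ : ℝ≥0∞} (hδ : δ ≠ 0) :
    ∃ f : ℝ → ℝ, f a = y ∧ f b = y ∧ eVariationOn f (Icc a b) < δ ∧ ∀ t ∈ Ioo a b, f t ≠ y := by
  obtain ⟨ε, hε, hεδ⟩ := ENNReal.exists_nnreal_pos_mul_lt ENNReal.ofReal_ne_top hδ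
  set tent : ℝ → ℝ := fun t => min (t - a) (b - t)
  have tent_lip : LipschitzWith 1 tent := by
    simpa using (LipschitzWith.id.sub (LipschitzWith.const a)).min
      ((LipschitzWith.const b).sub LipschitzWith.id)
  have f_lip : LipschitzWith ε fun t => y + ε * tent t := by
    simpa using (LipschitzWith.const y).add ((lipschitzWith_smul (ε : ℝ)).comp tent_lip)
  refine ⟨fun t => y + ε * tent t, by simp [tent, hab], by simp [tent, hab],
    f_lip.lipschitzOnWith.eVariationOn_Icc_le.trans_lt hεδ, fun t ht => ?_⟩
  have tent_pos : 0 < tent t := lt_min (sub_pos.2 ht.1) (sub_pos.2 ht.2)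
  simpa using (mul_pos (NNReal.coe_pos.2 hε) tent_pos).ne'

/-- Every polynomial function has a finitely permeable graph. -/
theorem polynomial_finitely_permeable_graph
    (a b : ℝ) (hab : a ≤ b) (p : Polynomial ℝ) :
    ∀ y : ℝ, ∀ δ : ℝ, 0 < δ →
      ∃ f : ℝ → ℝ, f a = y ∧ f b = y ∧
        eVariationOn f (Set.Icc a b) < ENNReal.ofReal δ ∧
        {t ∈ Set.Icc a b | f t = p.eval t}.Finite := by
  intro y δ hδ
  by_cases hp : p = Polynomial.C y
  · obtain ⟨f, hfa, hfb, hvar, hne⟩ :=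
      exists_eVariationOn_lt_forall_ne_of_mem_Ioo hab y (ENNReal.ofReal_pos.2 hδ).ne'
    refine ⟨f, hfa, hfb, hvar, (toFinite {a, b}).subset ?_⟩
    rintro t ⟨ht, hft⟩
    rw [← Icc_sdiff_Ioo_same hab]
    exact ⟨ht, fun hIoo => hne t hIoo (by simpa [hp] using hft)⟩
  · refine ⟨fun _ => y, rfl, rfl, by simpa [eVariationOn_const] using hδ, ?_⟩
    refine (Polynomial.finite_setOfPred_isRoot (sub_ne_zero.2 hp)).subset fun t ht => ?_
    simp [← ht.2]
end

section
/- There exists a dense G_δ set 𝒢 ⊆ C[0,1] (continuous functions with the supremum norm) such that for every g ∈ 𝒢, every y ∈ ℝ, and every δ > 0, there exists a function f : [0,1] → ℝ with f(0) = y, total variation V_0^1(f) < δ, and {t ∈ [0,1] : f(t) = g(t)} ⊆ {0}. -/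
/-!
A typical `g` lies, for every `m`, within `r = 1 / (8 (m + 1) (2 d + 1))` of some polynomial `p`
of degree `d`. Let `f` equal `y + 4 r` at the points `t > 0` where `|p t - y| < 2 r`, and `y`
elsewhere. Where `f = y + 4 r` the function `g` is within `3 r` of `y`, and where `f = y` it stays
at distance more than `r` from `y`, so `f` meets `g` at most at `0`. The step function `f` can only
jump across `0` and the roots of `(p - y)² - 4 r²`, at most `2 d + 1` points, each of which carries
at most two jumps of a partition sum; hence the variation of `f` is at most
`2 (2 d + 1) · 4 r = 1 / (m + 1)`.
-/

open Set Polynomial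
open scoped ENNReal

theorem eVariationOn_le_two_mul_card_mul {α E : Type*} [LinearOrder α] [PseudoEMetricSpace E]
    {f : α → E} (Z : Finset α) {c : ℝ≥0∞} (hc : ∀ a b, edist (f a) (f b) ≤ c)
    (hZ : ∀ a b, a ≤ b → (∀ z ∈ Z, z ∉ Icc a b) → f a = f b) (s : Set α) :
    eVariationOn f s ≤ 2 * Z.card * c := by
  classical
  refine iSup_le fun ⟨n, u, hu, _⟩ => ?_
  have : Nonempty α := ⟨u 0⟩
  set A := (Finset.range n).filter fun i => f (u (i + 1)) ≠ f (u i)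
  have hjump : ∀ i ∈ A, ∃ z ∈ Z, z ∈ Icc (u i) (u (i + 1)) := by
    intro i hi
    by_contra! h
    exact (Finset.mem_filter.mp hi).2 (hZ _ _ (hu i.le_succ) h).symm
  choose! z hzZ hzu using hjump
  -- If jump intervals `i < j` share the point `b = z i = z j`, then `b` is the right end of the
  -- `i`-th one but, since `u` jumps at `j`, not the right end of the `j`-th one.
  have hinj : InjOn (fun i => (z i, decide (z i = u (i + 1)))) A := by
    have key : ∀ i ∈ A, ∀ j ∈ A, i < j → z i = z j → z i = u (i + 1) ∧ z j ≠ u (j + 1) := by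
      intro i hi j hj hij hz
      have hmid : u (i + 1) ≤ u j := hu hij
      refine ⟨le_antisymm (hzu i hi).2 (hz ▸ hmid.trans (hzu j hj).1), fun hzj => ?_⟩
      have huj : u j = u (j + 1) :=
        le_antisymm (hu j.le_succ) (hzj ▸ hz ▸ (hzu i hi).2.trans hmid)
      exact (Finset.mem_filter.mp hj).2 (huj ▸ rfl)
    intro i hi j hj hij
    simp only [Prod.mk.injEq] at hij
    by_contra hne
    rcases lt_or_gt_of_ne hne with h | h
    · have := key i hi j hj h hij.1; simp_all
    · have := key j hj i hi h hij.1.symm; simp_all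
  calc ∑ i ∈ Finset.range n, edist (f (u (i + 1))) (f (u i))
      = ∑ i ∈ A, edist (f (u (i + 1))) (f (u i)) := by
        refine (Finset.sum_filter_of_ne fun i _ h => ?_).symm
        exact fun heq => h (by rw [heq, edist_self])
    _ ≤ A.card • c := Finset.sum_le_card_nsmul _ _ _ fun i _ => hc _ _
    _ ≤ (Z ×ˢ (Finset.univ : Finset Bool)).card • c := by
        gcongr
        exact Finset.card_le_card_of_injOn _
          (fun i hi => Finset.mem_product.2 ⟨hzZ i hi, Finset.mem_univ _⟩) hinj
    _ = 2 * Z.card * c := by simp [mul_comm]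

theorem neg_iff_neg_of_forall_ne_zero {f : ℝ → ℝ} {a b : ℝ} (hab : a ≤ b)
    (hf : ContinuousOn f (Icc a b)) (h0 : ∀ x ∈ Icc a b, f x ≠ 0) : f a < 0 ↔ f b < 0 := by
  constructor
  · intro ha
    by_contra! hb
    obtain ⟨x, hx, hx0⟩ := intermediate_value_Icc hab hf ⟨ha.le, hb⟩
    exact h0 x hx hx0
  · intro hb
    by_contra! ha
    obtain ⟨x, hx, hx0⟩ := intermediate_value_Icc' hab hf ⟨hb.le, ha⟩
    exact h0 x hx hx0

theorem Polynomial.eval_neg_iff_of_forall_notMem_roots (q : ℝ[X]) {a b : ℝ} (hab : a ≤ b)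
    (h : ∀ x ∈ q.roots.toFinset, x ∉ Icc a b) : q.eval a < 0 ↔ q.eval b < 0 := by
  rcases eq_or_ne q 0 with rfl | hq
  · simp
  refine neg_iff_neg_of_forall_ne_zero hab q.continuousOn fun x hx hx0 => h x ?_ hx
  simpa [hq] using hx0

theorem Polynomial.denseRange_toContinuousMapOn_Icc (a b : ℝ) :
    DenseRange fun p : ℝ[X] => p.toContinuousMapOn (Icc a b) :=
  Metric.denseRange_iff.2 fun f ε hε =>
    (exists_polynomial_near_continuousMap a b f ε hε).imp fun _ hp => by
      rwa [dist_comm, dist_eq_norm]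

theorem dense_isGδ_iInter_iUnion_ball {X ι κ : Type*} [PseudoMetricSpace X] [BaireSpace X]
    [Countable κ] {φ : ι → X} (hφ : DenseRange φ) {r : κ → ι → ℝ} (hr : ∀ m i, 0 < r m i) :
    Dense (⋂ m, ⋃ i, Metric.ball (φ i) (r m i)) ∧ IsGδ (⋂ m, ⋃ i, Metric.ball (φ i) (r m i)) := by
  have hopen : ∀ m, IsOpen (⋃ i, Metric.ball (φ i) (r m i)) :=
    fun m => isOpen_iUnion fun i => Metric.isOpen_ball
  refine ⟨dense_iInter_of_isOpen hopen fun m => hφ.mono ?_, .iInter_of_isOpen hopen⟩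
  rintro _ ⟨i, rfl⟩
  exact mem_iUnion.2 ⟨i, Metric.mem_ball_self (hr m i)⟩

theorem eVariationOn_ite_pos_and_eval_neg_le (q : ℝ[X]) (a b : ℝ) :
    eVariationOn (fun t => if 0 < t ∧ q.eval t < 0 then b else a) univ
      ≤ 2 * (q.natDegree + 1) * edist b a := by
  refine (eVariationOn_le_two_mul_card_mul (c := edist b a) (insert 0 q.roots.toFinset) ?_ ?_
    univ).trans ?_
  · intro x x'
    split_ifs <;> simp [edist_comm]
  · intro x x' hxx' hZ
    have h0 : 0 ∉ Icc x x' := hZ 0 (Finset.mem_insert_self _ _)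
    have hroots : ∀ z ∈ q.roots.toFinset, z ∉ Icc x x' :=
      fun z hz => hZ z (Finset.mem_insert_of_mem hz)
    congr 1
    rcases lt_or_ge 0 x with hx | hx
    · rw [q.eval_neg_iff_of_forall_notMem_roots hxx' hroots]
      simp [hx, hx.trans_le hxx']
    · have hx' : x' < 0 := by
        by_contra! hx'
        exact h0 ⟨hx, hx'⟩
      simp [hx.not_gt, hx'.not_gt]
  · have hroots := (Multiset.toFinset_card_le q.roots).trans (card_roots' q)
    have hcard := (Finset.card_insert_le 0 q.roots.toFinset).trans (Nat.succ_le_succ hroots)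
    gcongr
    exact_mod_cast hcard

theorem exists_eVariationOn_le_ne_of_abs_sub_eval_lt (p : ℝ[X]) (y : ℝ) {e : ℝ} (he : 0 < e)
    {s : Set ℝ} (g : s → ℝ) (hg : ∀ t : s, |g t - p.eval ↑t| < e) :
    ∃ f : ℝ → ℝ, f 0 = y ∧
      eVariationOn f univ ≤ ENNReal.ofReal (8 * (2 * p.natDegree + 1) * e) ∧
      ∀ t : s, 0 < (t : ℝ) → f t ≠ g t := by
  set q : ℝ[X] := (p - C y) ^ 2 - C ((2 * e) ^ 2)
  have hq : ∀ t, q.eval t < 0 ↔ |p.eval t - y| < 2 * e := by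
    intro t
    simp [q, sq_lt_sq, abs_of_pos he]
  have hqdeg : q.natDegree ≤ 2 * p.natDegree :=
    calc q.natDegree = ((p - C y) ^ 2).natDegree := natDegree_sub_C
      _ ≤ 2 * (p - C y).natDegree := natDegree_pow_le
      _ = 2 * p.natDegree := by rw [natDegree_sub_C]
  refine ⟨fun t => if 0 < t ∧ q.eval t < 0 then y + 4 * e else y, by simp, ?_, ?_⟩
  · calc _ ≤ 2 * (q.natDegree + 1) * edist (y + 4 * e) y :=
          eVariationOn_ite_pos_and_eval_neg_le q y (y + 4 * e)
      _ ≤ 2 * ((2 * p.natDegree + 1 : ℕ) : ℝ≥0∞) * ENNReal.ofReal (4 * e) := by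
          rw [edist_dist, Real.dist_eq, add_sub_cancel_left, abs_of_pos (by positivity)]
          gcongr
          exact_mod_cast Nat.succ_le_succ hqdeg
      _ = ENNReal.ofReal (8 * (2 * p.natDegree + 1) * e) := by
          rw [← ENNReal.ofReal_natCast, ← ENNReal.ofReal_ofNat 2,
            ← ENNReal.ofReal_mul (by norm_num), ← ENNReal.ofReal_mul (by positivity)]
          congr 1
          push_cast
          ring
  · intro t ht hfg
    have hgt := abs_lt.1 (hg t)
    dsimp only at hfg
    split_ifs at hfg with hP
    · have := abs_lt.1 ((hq t).1 hP.2)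
      linarith
    · have := (hq t).not.1 fun h => hP ⟨ht, h⟩
      rw [not_lt, le_abs'] at this
      rcases this with h | h <;> linarith

/-- There is a dense `Gδ` set `𝒢` in `C[0,1]` such that every `g ∈ 𝒢`
can, for every `y` and `δ > 0`, be avoided (except possibly at `0`) by a function `f`
with `f 0 = y` and total variation `< δ`. -/
theorem typical_continuous_function_avoidable :
    ∃ 𝒢 : Set C(Set.Icc (0:ℝ) 1, ℝ), Dense 𝒢 ∧ IsGδ 𝒢 ∧
      ∀ g ∈ 𝒢, ∀ y : ℝ, ∀ δ : ℝ, 0 < δ →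
        ∃ f : ℝ → ℝ, f 0 = y ∧
          eVariationOn f (Set.Icc 0 1) < ENNReal.ofReal δ ∧
          ∀ t : Set.Icc (0:ℝ) 1, f t = g t → (t : ℝ) = 0 := by
  set r : ℕ → ℝ[X] → ℝ := fun m p => ((m : ℝ) + 1)⁻¹ / (8 * (2 * p.natDegree + 1))
  have hr : ∀ m p, 0 < r m p := fun m p => by positivity
  obtain ⟨hdense, hGδ⟩ :=
    dense_isGδ_iInter_iUnion_ball (Polynomial.denseRange_toContinuousMapOn_Icc 0 1) hr
  refine ⟨_, hdense, hGδ, fun g hg y δ hδ => ?_⟩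
  obtain ⟨m, hm⟩ := exists_nat_one_div_lt hδ
  obtain ⟨p, hp⟩ := mem_iUnion.1 (mem_iInter.1 hg m)
  have hgp : ∀ t : Icc (0:ℝ) 1, |g t - p.eval ↑t| < r m p := fun t => by
    simpa [Real.dist_eq] using (ContinuousMap.dist_lt_iff (hr m p)).1 hp t
  obtain ⟨f, hf0, hfvar, hfg⟩ := exists_eVariationOn_le_ne_of_abs_sub_eval_lt p y (hr m p) g hgp
  refine ⟨f, hf0, ?_, fun t ht => by_contra fun h0 => hfg t (t.2.1.lt_of_ne' h0) ht⟩
  calc eVariationOn f (Icc 0 1) ≤ eVariationOn f univ := eVariationOn.mono _ (subset_univ _)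
    _ ≤ ENNReal.ofReal (8 * (2 * p.natDegree + 1) * r m p) := hfvar
    _ = ENNReal.ofReal (1 / ((m : ℝ) + 1)) := by
        congr 1
        simp only [r]
        field_simp
    _ < ENNReal.ofReal δ := (ENNReal.ofReal_lt_ofReal_iff hδ).2 hm
end

section
/- Let j ∈ ℕ, j ≥ 2, and β ∈ (0,1). Suppose g : [0,1] → ℝ is continuous and there exists a constant C such that |g((n+1)j^{-k}) − g(n j^{-k})| ≤ β^k for all k ∈ ℕ and 0 ≤ n < j^k. Then g is Hölder continuous with exponent α = −log(β)/log(j). -/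
/-!
Write `p_k x = ⌊x j^k⌋ / j^k`. Since `p_k x` is the level-`(k+1)` grid point `j ⌊x j^k⌋`, at
most `j - 1` steps below `p_{k+1} x`, we get `|g (p_{k+1} x) - g (p_k x)| ≤ (j-1) β^(k+1)`; as
`p_k x → x`, continuity and a geometric sum give `|g x - g (p_k x)| ≤ (j-1) β^(k+1) / (1-β)`.
If `|x - y| ≤ j^(-k)` then `p_k x` and `p_k y` are at most one level-`k` step apart, so
`|g x - g y| ≤ K β^k` with `K = 2 (j-1) β / (1-β) + 1`. Choosing `k` with
`j^(-k-1) < |x - y| ≤ j^(-k)` and using `β^k = (j^(-k))^α` gives the Hölder bound with constant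
`K j^α`.
-/

open Set Filter Topology

theorem dist_le_mul_of_dist_succ_le {E : Type*} [PseudoMetricSpace E] (f : ℕ → E) {a b : ℕ}
    {c : ℝ} (hab : a ≤ b) (h : ∀ n, a ≤ n → n < b → dist (f n) (f (n + 1)) ≤ c) :
    dist (f a) (f b) ≤ (b - a : ℕ) * c := by
  simpa using dist_le_Ico_sum_of_dist_le hab fun {n} hn hn' => h n hn hn'

theorem floor_mul_pow_succ_div (j : ℕ) (hj : j ≠ 0) (x : ℝ) (k : ℕ) :
    ⌊x * (j : ℝ) ^ (k + 1)⌋₊ / j = ⌊x * (j : ℝ) ^ k⌋₊ := by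
  rw [← Nat.floor_div_natCast, pow_succ, ← mul_assoc, mul_div_cancel_right₀ _ (by positivity)]

section Floor

variable {x : ℝ}

theorem floor_mul_pow_le_pow (j : ℕ) (hx : x ≤ 1) (k : ℕ) : ⌊x * (j : ℝ) ^ k⌋₊ ≤ j ^ k :=
  Nat.floor_le_of_le (by push_cast; exact mul_le_of_le_one_left (by positivity) hx)

theorem floor_mul_div_le (hx : 0 ≤ x) {q : ℝ} (hq : 0 < q) : (⌊x * q⌋₊ : ℝ) / q ≤ x :=
  (div_le_iff₀ hq).2 (Nat.floor_le (by positivity))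

theorem floor_mul_le_floor_mul_add_one (hx : 0 ≤ x) {y q : ℝ} (hq : 0 < q) (hy : y ≤ x + q⁻¹) :
    ⌊y * q⌋₊ ≤ ⌊x * q⌋₊ + 1 := by
  rw [← Nat.floor_add_one (by positivity)]
  refine Nat.floor_le_floor ?_
  calc y * q ≤ (x + q⁻¹) * q := by gcongr
    _ = x * q + 1 := by field_simp

end Floor

theorem tendsto_floor_mul_pow_div {j : ℕ} (hj : 1 < j) {x : ℝ} (hx : 0 ≤ x) :
    Tendsto (fun k : ℕ => (⌊x * (j : ℝ) ^ k⌋₊ : ℝ) / (j : ℝ) ^ k) atTop (𝓝 x) :=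
  (tendsto_nat_floor_mul_div_atTop hx).comp
    (tendsto_pow_atTop_atTop_of_one_lt (by exact_mod_cast hj))

theorem inv_pow_rpow_neg_logb {b : ℝ} (hb : 1 < b) {β : ℝ} (hβ : 0 < β) (k : ℕ) :
    ((b ^ k)⁻¹) ^ (-Real.logb b β) = β ^ k := by
  rw [Real.inv_rpow (by positivity), Real.rpow_neg (by positivity), inv_inv,
    ← Real.rpow_natCast, ← Real.rpow_mul (by positivity), mul_comm, Real.rpow_mul (by positivity),
    Real.rpow_logb (by positivity) hb.ne' hβ, Real.rpow_natCast]

theorem dist_le_of_forall_dist_le_inv_pow {X E : Type*} [MetricSpace X] [PseudoMetricSpace E]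
    {s : Set X} {f : X → E} {b α K : ℝ} (hb : 1 < b) (hα : 0 ≤ α) (hK : 0 ≤ K)
    (h : ∀ k : ℕ, ∀ x ∈ s, ∀ y ∈ s, dist x y ≤ (b ^ k)⁻¹ → dist (f x) (f y) ≤ K * ((b ^ k)⁻¹) ^ α)
    {x y : X} (hx : x ∈ s) (hy : y ∈ s) (hxy : dist x y ≤ 1) :
    dist (f x) (f y) ≤ K * b ^ α * dist x y ^ α := by
  rcases eq_or_ne x y with rfl | hne
  · rw [dist_self]; positivity
  have hd : 0 < dist x y := dist_pos.2 hne
  obtain ⟨k, hk, hk'⟩ := exists_nat_pow_near (one_le_inv_iff₀.2 ⟨hd, hxy⟩) hb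
  have hscale : (b ^ k)⁻¹ ≤ b * dist x y := by
    rw [inv_le_iff_one_le_mul₀ (by positivity)]
    convert ((inv_lt_iff_one_lt_mul₀ hd).1 hk').le using 1
    ring
  calc dist (f x) (f y) ≤ K * ((b ^ k)⁻¹) ^ α :=
        h k x hx y hy ((le_inv_comm₀ hd (by positivity)).2 hk)
    _ ≤ K * (b * dist x y) ^ α := by gcongr
    _ = K * b ^ α * dist x y ^ α := by rw [Real.mul_rpow (by positivity) hd.le, mul_assoc]

section Increments

variable {E : Type*} [PseudoMetricSpace E] {j : ℕ} {β : ℝ} {g : ℝ → E} {x y : ℝ}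

def GridIncrementsLE (j : ℕ) (β : ℝ) (g : ℝ → E) : Prop :=
  ∀ k n : ℕ, n < j ^ k → dist (g (n / (j : ℝ) ^ k)) (g ((n + 1 : ℕ) / (j : ℝ) ^ k)) ≤ β ^ k

theorem dist_grid_le
    (hinc : GridIncrementsLE j β g) {k a b : ℕ} (hab : a ≤ b) (hb : b ≤ j ^ k) :
    dist (g (a / (j : ℝ) ^ k)) (g (b / (j : ℝ) ^ k)) ≤ (b - a : ℕ) * β ^ k :=
  dist_le_mul_of_dist_succ_le (fun n : ℕ => g (n / (j : ℝ) ^ k)) hab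
    fun n _ hn => hinc k n (by omega)

theorem dist_floor_approx_succ_le
    (hinc : GridIncrementsLE j β g)
    (hj : j ≠ 0) (hβ : 0 ≤ β) (hx : x ≤ 1) (m : ℕ) :
    dist (g (⌊x * (j : ℝ) ^ m⌋₊ / (j : ℝ) ^ m))
      (g (⌊x * (j : ℝ) ^ (m + 1)⌋₊ / (j : ℝ) ^ (m + 1))) ≤ ((j : ℝ) - 1) * β ^ (m + 1) := by
  set N := ⌊x * (j : ℝ) ^ (m + 1)⌋₊
  have hcoarse : ((N / j : ℕ) : ℝ) / (j : ℝ) ^ m = ((j * (N / j) : ℕ) : ℝ) / (j : ℝ) ^ (m + 1) := by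
    push_cast; field_simp; ring
  have hmod : ((N % j : ℕ) : ℝ) + 1 ≤ j := by exact_mod_cast Nat.mod_lt N (Nat.pos_of_ne_zero hj)
  rw [← floor_mul_pow_succ_div j hj x m, hcoarse]
  calc _ ≤ ((N - j * (N / j) : ℕ) : ℝ) * β ^ (m + 1) :=
        dist_grid_le hinc (Nat.mul_div_le N j) (floor_mul_pow_le_pow j hx _)
    _ ≤ ((j : ℝ) - 1) * β ^ (m + 1) := by
        rw [← Nat.mod_eq_sub_mul_div]
        gcongr
        linarith

theorem dist_floor_approx_le
    (hinc : GridIncrementsLE j β g)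
    (hj : 1 < j) (hβ0 : 0 ≤ β) (hβ1 : β < 1) (hg : ContinuousOn g (Icc 0 1))
    (hx : x ∈ Icc (0 : ℝ) 1) (k : ℕ) :
    dist (g (⌊x * (j : ℝ) ^ k⌋₊ / (j : ℝ) ^ k)) (g x) ≤ ((j : ℝ) - 1) * β / (1 - β) * β ^ k := by
  have hmem : ∀ k : ℕ, (⌊x * (j : ℝ) ^ k⌋₊ : ℝ) / (j : ℝ) ^ k ∈ Icc (0 : ℝ) 1 := fun k =>
    ⟨by positivity, (floor_mul_div_le hx.1 (by positivity)).trans hx.2⟩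
  have hlim : Tendsto (fun k : ℕ => g (⌊x * (j : ℝ) ^ k⌋₊ / (j : ℝ) ^ k)) atTop (𝓝 (g x)) :=
    (hg x hx).tendsto.comp
      (tendsto_nhdsWithin_iff.2 ⟨tendsto_floor_mul_pow_div hj hx.1, Eventually.of_forall hmem⟩)
  have hstep (m : ℕ) : dist (g (⌊x * (j : ℝ) ^ m⌋₊ / (j : ℝ) ^ m))
      (g (⌊x * (j : ℝ) ^ (m + 1)⌋₊ / (j : ℝ) ^ (m + 1))) ≤ ((j : ℝ) - 1) * β * β ^ m :=
    (dist_floor_approx_succ_le hinc (by omega) hβ0 hx.2 m).trans_eq (by ring)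
  exact (dist_le_of_le_geometric_of_tendsto β _ hβ1 hstep hlim k).trans_eq (by ring)

theorem dist_le_of_abs_sub_le_inv_pow
    (hinc : GridIncrementsLE j β g)
    (hj : 1 < j) (hβ0 : 0 ≤ β) (hβ1 : β < 1) (hg : ContinuousOn g (Icc 0 1))
    (hx : x ∈ Icc (0 : ℝ) 1) (hy : y ∈ Icc (0 : ℝ) 1) {k : ℕ} (hxy : |x - y| ≤ ((j : ℝ) ^ k)⁻¹) :
    dist (g x) (g y) ≤ (2 * (((j : ℝ) - 1) * β / (1 - β)) + 1) * β ^ k := by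
  wlog hle : x ≤ y generalizing x y
  · rw [dist_comm]
    exact this hy hx (by rwa [abs_sub_comm]) (le_of_not_ge hle)
  set D := ((j : ℝ) - 1) * β / (1 - β)
  have hnear : ⌊y * (j : ℝ) ^ k⌋₊ ≤ ⌊x * (j : ℝ) ^ k⌋₊ + 1 :=
    floor_mul_le_floor_mul_add_one hx.1 (by positivity) (by linarith [abs_sub_le_iff.1 hxy])
  have hmono : ⌊x * (j : ℝ) ^ k⌋₊ ≤ ⌊y * (j : ℝ) ^ k⌋₊ := Nat.floor_le_floor (by gcongr)
  have hstep : dist (g (⌊x * (j : ℝ) ^ k⌋₊ / (j : ℝ) ^ k)) (g (⌊y * (j : ℝ) ^ k⌋₊ / (j : ℝ) ^ k))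
      ≤ β ^ k :=
    calc _ ≤ ((⌊y * (j : ℝ) ^ k⌋₊ - ⌊x * (j : ℝ) ^ k⌋₊ : ℕ) : ℝ) * β ^ k :=
          dist_grid_le hinc hmono (floor_mul_pow_le_pow j hy.2 k)
      _ ≤ 1 * β ^ k := by gcongr; exact Nat.cast_le_one.2 (by omega)
      _ = β ^ k := one_mul _
  calc dist (g x) (g y)
      ≤ dist (g x) (g (⌊x * (j : ℝ) ^ k⌋₊ / (j : ℝ) ^ k))
        + dist (g (⌊x * (j : ℝ) ^ k⌋₊ / (j : ℝ) ^ k)) (g (⌊y * (j : ℝ) ^ k⌋₊ / (j : ℝ) ^ k))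
        + dist (g (⌊y * (j : ℝ) ^ k⌋₊ / (j : ℝ) ^ k)) (g y) := dist_triangle4 _ _ _ _
    _ ≤ D * β ^ k + β ^ k + D * β ^ k := by
        gcongr
        · rw [dist_comm]; exact dist_floor_approx_le hinc hj hβ0 hβ1 hg hx k
        · exact dist_floor_approx_le hinc hj hβ0 hβ1 hg hy k
    _ = (2 * D + 1) * β ^ k := by ring

end Increments

/-- If a continuous `g : [0,1] → ℝ` satisfies
`|g((n+1)/j^k) − g(n/j^k)| ≤ β^k` over all consecutive `j`-adic points, then `g` is
Hölder continuous on `[0,1]` with exponent `α = −log β / log j`. -/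
theorem holder_from_dyadic_increments
    (j : ℕ) (hj : 2 ≤ j) (β : ℝ) (hβ : β ∈ Set.Ioo (0:ℝ) 1)
    (g : ℝ → ℝ) (hg : ContinuousOn g (Set.Icc 0 1))
    (hinc : ∀ k n : ℕ, n < j ^ k →
      |g ((n + 1 : ℝ) / (j : ℝ) ^ k) - g ((n : ℝ) / (j : ℝ) ^ k)| ≤ β ^ k) :
    ∃ C : ℝ, 0 < C ∧ ∀ x ∈ Set.Icc (0:ℝ) 1, ∀ y ∈ Set.Icc (0:ℝ) 1,
      |g x - g y| ≤ C * |x - y| ^ (-(Real.log β / Real.log j)) := by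
  obtain ⟨hβ0, hβ1⟩ := hβ
  have hj1 : (1 : ℝ) < j := by exact_mod_cast hj
  have hα : 0 ≤ -(Real.log β / Real.log j) :=
    neg_nonneg.2 <| div_nonpos_of_nonpos_of_nonneg (Real.log_nonpos hβ0.le hβ1.le)
      (Real.log_nonneg hj1.le)
  set K := 2 * (((j : ℝ) - 1) * β / (1 - β)) + 1
  have hK : 0 < K := by
    have : 0 ≤ ((j : ℝ) - 1) * β / (1 - β) := div_nonneg (by nlinarith) (by linarith)
    linarith
  have hgrid : GridIncrementsLE j β g := fun k n hn => by
    rw [dist_comm, Real.dist_eq]; push_cast; exact hinc k n hn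
  refine ⟨K * (j : ℝ) ^ (-(Real.log β / Real.log j)), by positivity, fun x hx y hy => ?_⟩
  rw [← Real.dist_eq, ← Real.dist_eq]
  refine dist_le_of_forall_dist_le_inv_pow hj1 hα hK.le (fun k x hx y hy hxy => ?_) hx hy ?_
  · rw [Real.log_div_log, inv_pow_rpow_neg_logb hj1 hβ0]
    exact dist_le_of_abs_sub_le_inv_pow hgrid hj hβ0.le hβ1 hg hx hy hxy
  · rw [Real.dist_eq, abs_sub_le_iff]
    constructor <;> linarith [hx.1, hx.2, hy.1, hy.2]
end

section
/- Let f : [a,b] → ℝ be a regulated function. Then the total variation of f equals the supremum over partitions a = x_0 < … < x_n = b of ∑_{k=1}^n ( |f(x_{k−1}+) − f(x_{k−1})| + |f(x_k−) − f(x_{k−1}+)| + |f(x_k) − f(x_k−)| ). -/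
open Set Filter
open scoped ENNReal Topology

/-!
Both sides are suprema over partitions. A variation sum of `f` is dominated by the jump-split
sum of the partition obtained by sorting its points together with `a` and `b`, since
`|f(d) − f(c)|` is at most the corresponding summand by the triangle inequality through `f(c+)`
and `f(d−)`. Conversely, the variation is additive over the intervals of a partition, and on
`[c, d]` it dominates `|f(y) − f(c)| + |f(z) − f(y)| + |f(d) − f(z)|` for `c < y < z < d`;
letting `y ↓ c` and `z ↑ d` turns this into the jump-split summand.
-/

section Partition

variable {α E : Type*} [LinearOrder α] [PseudoEMetricSpace E]

theorem Finset.exists_monotone_image_Iic_eq (F : Finset α) (hF : F.Nonempty) :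
    ∃ (m : ℕ) (x : ℕ → α), Monotone x ∧ StrictMonoOn x (Set.Iic m) ∧ x '' Set.Iic m = F := by
  have hcard := F.card_pos.2 hF
  let e := F.orderEmbOfFin rfl
  refine ⟨F.card - 1, fun i ↦ e ⟨min i (F.card - 1), by omega⟩, ?_, ?_, ?_⟩
  · exact fun i j hij ↦ e.monotone (Fin.mk_le_mk.2 (min_le_min_right _ hij))
  · intro i hi j hj hij
    simp only [Set.mem_Iic] at hi hj
    exact e.strictMono (Fin.mk_lt_mk.2 (by omega))
  · rw [← F.range_orderEmbOfFin rfl]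
    ext t
    simp only [Set.mem_image, Set.mem_Iic, Set.mem_range]
    constructor
    · rintro ⟨i, -, rfl⟩
      exact ⟨_, rfl⟩
    · rintro ⟨i, rfl⟩
      exact ⟨i, by omega, by simp [e, Nat.min_eq_left (by omega : (i : ℕ) ≤ F.card - 1)]⟩

theorem exists_partition_sum_edist_le {f : α → E} {a b : α} {n : ℕ} {u : ℕ → α}
    (hu : MonotoneOn u (Iic n)) (us : ∀ i ≤ n, u i ∈ Icc a b) :
    ∃ (m : ℕ) (x : ℕ → α), x 0 = a ∧ x m = b ∧ StrictMonoOn x (Iic m) ∧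
      ∑ i ∈ Finset.range n, edist (f (u (i + 1))) (f (u i)) ≤
        ∑ k ∈ Finset.range m, edist (f (x (k + 1))) (f (x k)) := by
  classical
  set F : Finset α := insert a (insert b ((Finset.range (n + 1)).image u))
  have hab : a ≤ b := (us 0 (Nat.zero_le n)).1.trans (us 0 (Nat.zero_le n)).2
  have hFab : ∀ t ∈ F, t ∈ Icc a b := by
    intro t ht
    simp only [F, Finset.mem_insert, Finset.mem_image, Finset.mem_range] at ht
    rcases ht with rfl | rfl | ⟨i, hi, rfl⟩
    exacts [⟨le_rfl, hab⟩, ⟨hab, le_rfl⟩, us i (by omega)]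
  obtain ⟨m, x, hx, hxm, hxF⟩ := F.exists_monotone_image_Iic_eq ⟨a, by simp [F]⟩
  have exists_eq_of_mem_F : ∀ t ∈ F, ∃ i ≤ m, x i = t := fun t ht ↦ by
    rw [← Finset.mem_coe, ← hxF] at ht
    simpa using ht
  have x_mem : ∀ i ≤ m, x i ∈ Icc a b := fun i hi ↦
    hFab _ (Finset.mem_coe.1 (hxF ▸ mem_image_of_mem x (mem_Iic.2 hi)))
  refine ⟨m, x, ?_, ?_, hxm, ?_⟩
  · obtain ⟨i, -, hi⟩ := exists_eq_of_mem_F a (by simp [F])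
    exact le_antisymm (hi ▸ hx (Nat.zero_le i)) (x_mem 0 (Nat.zero_le m)).1
  · obtain ⟨i, hi, hib⟩ := exists_eq_of_mem_F b (by simp [F])
    exact le_antisymm (x_mem m le_rfl).2 (hib ▸ hx hi)
  calc ∑ i ∈ Finset.range n, edist (f (u (i + 1))) (f (u i))
      ≤ eVariationOn f (F : Set α) := eVariationOn.sum_le_of_monotoneOn_Iic hu fun i hi ↦ by
        simp only [F, Finset.coe_insert, Finset.coe_image, Finset.coe_range]
        exact Or.inr (Or.inr ⟨i, by simp; omega, rfl⟩)
    _ = ∑ k ∈ Finset.range m, edist (f (x (k + 1))) (f (x k)) := by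
        rw [← hxF, eVariationOn.image_range_of_monotone f hx]
        simp only [edist_comm]

theorem eVariationOn_Icc_eq_sum {f : α → E} {x : ℕ → α} {n : ℕ} (hx : MonotoneOn x (Iic n)) :
    eVariationOn f (Icc (x 0) (x n)) =
      ∑ k ∈ Finset.range n, eVariationOn f (Icc (x k) (x (k + 1))) := by
  have hI : Monotone fun i ↦ x (min i n) := fun i j hij ↦
    hx (mem_Iic.2 (min_le_right i n)) (mem_Iic.2 (min_le_right j n)) (min_le_min_right n hij)
  have := eVariationOn.sum' f hI (n := n)
  simp only [Nat.zero_min, min_self] at this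
  rw [← this]
  refine Finset.sum_congr rfl fun k hk ↦ ?_
  rw [Finset.mem_range] at hk
  rw [Nat.min_eq_left hk.le, Nat.min_eq_left hk]

theorem eVariationOn_Icc_add_Icc (f : α → E) {a b c : α} (hab : a ≤ b) (hbc : b ≤ c) :
    eVariationOn f (Icc a b) + eVariationOn f (Icc b c) = eVariationOn f (Icc a c) := by
  simpa using eVariationOn.Icc_add_Icc f (s := univ) hab hbc (mem_univ b)

theorem edist_add_edist_add_edist_le_eVariationOn (f : α → E) {a b c d : α} (hab : a ≤ b)
    (hbc : b ≤ c) (hcd : c ≤ d) :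
    edist (f b) (f a) + edist (f c) (f b) + edist (f d) (f c) ≤ eVariationOn f (Icc a d) := by
  rw [← eVariationOn_Icc_add_Icc f (hab.trans hbc) hcd, ← eVariationOn_Icc_add_Icc f hab hbc]
  gcongr <;> exact eVariationOn.edist_le f (by simp [*]) (by simp [*])

end Partition

/-- `|f(c+) − f(c)| + |f(d−) − f(c+)| + |f(d) − f(d−)|`, where `fp` and `fm` stand for the
right- and left-limit functions of `f`. -/
noncomputable def jumpIncrement (f fp fm : ℝ → ℝ) (c d : ℝ) : ℝ≥0∞ :=
  ENNReal.ofReal (|fp c - f c| + |fm d - fp c| + |f d - fm d|)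

theorem edist_le_jumpIncrement (f fp fm : ℝ → ℝ) (c d : ℝ) :
    edist (f d) (f c) ≤ jumpIncrement f fp fm c d := by
  rw [edist_dist, Real.dist_eq, jumpIncrement]
  refine ENNReal.ofReal_le_ofReal ?_
  calc |f d - f c| = |(fp c - f c) + (fm d - fp c) + (f d - fm d)| := by congr 1; ring
    _ ≤ |fp c - f c| + |fm d - fp c| + |f d - fm d| := abs_add_three _ _ _

theorem jumpIncrement_le_eVariationOn {f fp fm : ℝ → ℝ} {c d : ℝ} (hcd : c < d)
    (hfp : Tendsto f (𝓝[>] c) (𝓝 (fp c))) (hfm : Tendsto f (𝓝[<] d) (𝓝 (fm d))) :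
    jumpIncrement f fp fm c d ≤ eVariationOn f (Icc c d) := by
  obtain ⟨e, hce, hed⟩ := exists_between hcd
  have h_sum : ∀ y ∈ Ioo c e, ∀ z ∈ Ioo e d,
      ENNReal.ofReal (|f y - f c| + |f z - f y| + |f d - f z|) ≤ eVariationOn f (Icc c d) := by
    rintro y ⟨hcy, hye⟩ z ⟨hez, hzd⟩
    refine le_trans ?_ <|
      edist_add_edist_add_edist_le_eVariationOn f hcy.le (hye.trans hez).le hzd.le
    simp only [edist_dist, Real.dist_eq]
    exact ENNReal.ofReal_add_le.trans (by gcongr; exact ENNReal.ofReal_add_le)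
  have h_lim : Tendsto
      (fun p : ℝ × ℝ ↦ ENNReal.ofReal (|f p.1 - f c| + |f p.2 - f p.1| + |f d - f p.2|))
      (𝓝[>] c ×ˢ 𝓝[<] d) (𝓝 (jumpIncrement f fp fm c d)) := by
    have h1 : Tendsto (fun p : ℝ × ℝ ↦ f p.1) (𝓝[>] c ×ˢ 𝓝[<] d) (𝓝 (fp c)) :=
      hfp.comp tendsto_fst
    have h2 : Tendsto (fun p : ℝ × ℝ ↦ f p.2) (𝓝[>] c ×ˢ 𝓝[<] d) (𝓝 (fm d)) :=
      hfm.comp tendsto_snd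
    exact ENNReal.tendsto_ofReal ((((h1.sub_const _).abs).add ((h2.sub h1).abs)).add
      ((h2.const_sub _).abs))
  refine le_of_tendsto h_lim ?_
  filter_upwards [prod_mem_prod (Ioo_mem_nhdsGT hce) (Ioo_mem_nhdsLT hed)] with p hp
  exact h_sum p.1 hp.1 p.2 hp.2

theorem regulated_variation_formula_general
    (a b : ℝ) (f fp fm : ℝ → ℝ)
    (hfp : ∀ x ∈ Set.Ico a b,
      Tendsto f (nhdsWithin x (Set.Ioc x b)) (𝓝 (fp x)))
    (hfm : ∀ x ∈ Set.Ioc a b,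
      Tendsto f (nhdsWithin x (Set.Ico a x)) (𝓝 (fm x))) :
    eVariationOn f (Set.Icc a b) =
      sSup {S : ℝ≥0∞ | ∃ n : ℕ, ∃ x : ℕ → ℝ,
        x 0 = a ∧ x n = b ∧ StrictMonoOn x (Set.Iic n) ∧
        S = ∑ k ∈ Finset.range n, ENNReal.ofReal
          (|fp (x k) - f (x k)| + |fm (x (k + 1)) - fp (x k)| +
            |f (x (k + 1)) - fm (x (k + 1))|)} := by
  refine le_antisymm (iSup_le ?_) (sSup_le ?_)
  · rintro ⟨n, u, hu, us⟩
    obtain ⟨m, x, hx0, hxm, hx, h_le⟩ := exists_partition_sum_edist_le (f := f) (hu.monotoneOn _)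
      fun i _ ↦ us i
    refine h_le.trans ((Finset.sum_le_sum fun k _ ↦ edist_le_jumpIncrement f fp fm _ _).trans ?_)
    exact le_sSup ⟨m, x, hx0, hxm, hx, rfl⟩
  · rintro _ ⟨n, x, rfl, rfl, hx, rfl⟩
    rw [eVariationOn_Icc_eq_sum hx.monotoneOn]
    refine Finset.sum_le_sum fun k hk ↦ ?_
    rw [Finset.mem_range] at hk
    have hlt : x k < x (k + 1) := hx (by simp; omega) (by simp; omega) (Nat.lt_succ_self k)
    have h0k : x 0 ≤ x k := hx.monotoneOn (by simp) (by simp; omega) (Nat.zero_le k)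
    have hkn : x (k + 1) ≤ x n := hx.monotoneOn (by simp; omega) (by simp) hk
    refine jumpIncrement_le_eVariationOn hlt ?_ ?_
    · rw [← nhdsWithin_Ioc_eq_nhdsGT (hlt.trans_le hkn)]
      exact hfp _ ⟨h0k, hlt.trans_le hkn⟩
    · rw [← nhdsWithin_Ico_eq_nhdsLT (h0k.trans_lt hlt)]
      exact hfm _ ⟨h0k.trans_lt hlt, hkn⟩

/-- For a regulated function `f : [a,b] → ℝ` (with right-limit function
`fp` and left-limit function `fm`, where `fm a = f a` and `fp b = f b`), the total
variation of `f` on `[a,b]` equals the supremum over partitions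
`a = x₀ < … < xₙ = b` of
`∑ (|f(xₖ₋₁+) − f(xₖ₋₁)| + |f(xₖ−) − f(xₖ₋₁+)| + |f(xₖ) − f(xₖ−)|)`. -/
theorem regulated_variation_formula
    (a b : ℝ) (hab : a ≤ b) (f fp fm : ℝ → ℝ)
    (hfp : ∀ x ∈ Set.Ico a b,
      Tendsto f (nhdsWithin x (Set.Ioc x b)) (𝓝 (fp x)))
    (hfpb : fp b = f b)
    (hfm : ∀ x ∈ Set.Ioc a b,
      Tendsto f (nhdsWithin x (Set.Ico a x)) (𝓝 (fm x)))
    (hfma : fm a = f a) :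
    eVariationOn f (Set.Icc a b) =
      sSup {S : ℝ≥0∞ | ∃ n : ℕ, ∃ x : ℕ → ℝ,
        x 0 = a ∧ x n = b ∧ StrictMonoOn x (Set.Iic n) ∧
        S = ∑ k ∈ Finset.range n, ENNReal.ofReal
          (|fp (x k) - f (x k)| + |fm (x (k + 1)) - fp (x k)| +
            |f (x (k + 1)) - fm (x (k + 1))|)} :=
  regulated_variation_formula_general a b f fp fm hfp hfm
end

section
/- Let M be a length space, let Θ ⊆ M be a permeable subset, and let (Y, d_Y) be a metric space. Then every continuous function f : M → Y which is intrinsically L-Lipschitz continuous on E = M ∖ Θ is L-Lipschitz continuous on all of M with respect to the metric d of M. -/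
open Set Filter
open scoped ENNReal NNReal Topology

/-- The intrinsic (pseudo-)metric of a subset `E` of a metric space: the infimum of the
lengths of paths from `x` to `y` that stay in `E` (`∞` if there is no such path). -/
noncomputable def intrinsicMetric {M : Type*} [PseudoEMetricSpace M]
    (E : Set M) (x y : M) : ℝ≥0∞ :=
  ⨅ (γ : ℝ → M) (_ : ContinuousOn γ (Set.Icc 0 1))
    (_ : Set.MapsTo γ (Set.Icc 0 1) E) (_ : γ 0 = x) (_ : γ 1 = y),
    eVariationOn γ (Set.Icc 0 1)

/-- The `Θ`-intrinsic metric on a metric space `M`: the infimum of the lengths of paths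
from `x` to `y` whose image meets `Θ` in a set with at most countable closure. -/
noncomputable def thetaIntrinsicMetric {M : Type*} [EMetricSpace M]
    (Θ : Set M) (x y : M) : ℝ≥0∞ :=
  ⨅ (γ : ℝ → M) (_ : ContinuousOn γ (Set.Icc 0 1))
    (_ : γ 0 = x) (_ : γ 1 = y)
    (_ : (closure (γ '' Set.Icc 0 1 ∩ Θ)).Countable),
    eVariationOn γ (Set.Icc 0 1)

/-!
Join `x` to `y` by a path `γ` of length almost `d(x, y)` meeting `Θ` in a set `S` with countable
closure. Near any time at which `γ` is off the closed set `S`, the path runs in `Θᶜ`, so there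
`f ∘ γ` moves by at most `L` times the length travelled. Nothing is known at the times when `γ`
is in `S`; but `f '' S` is countable, so its points `k` can be given weights `w k > 0` of total
sum `< ε`. A continuous induction along `γ` then keeps the distance from `f x` below `L` times
the length travelled plus the weights of those `k` whose distance from `f x` the running maximum
has already passed: whenever the running maximum starts to grow at a time spent in `S`, it does
so from the distance of some `k`, and the newly counted weight `w k` pays for the growth.
-/

theorem real_induction_Icc {α : Type*} [ConditionallyCompleteLinearOrder α] [TopologicalSpace α]
    [OrderTopology α] {a b : α} {P : α → Prop} (hab : a ≤ b) (ha : P a)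
    (hlim : ∀ c ∈ Ioc a b, (∀ t ∈ Ico a c, P t) → P c)
    (hstep : ∀ c ∈ Ico a b, (∀ t ∈ Icc a c, P t) → ∀ᶠ t in 𝓝[>] c, P t) :
    ∀ t ∈ Icc a b, P t := by
  set A := {t ∈ Icc a b | ∀ s ∈ Icc a t, P s}
  have haA : a ∈ A := ⟨⟨le_rfl, hab⟩, fun s hs => le_antisymm hs.2 hs.1 ▸ ha⟩
  have hbdd : BddAbove A := ⟨b, fun t ht => ht.1.2⟩
  set c := sSup A
  have hac : a ≤ c := le_csSup hbdd haA
  have hcb : c ≤ b := csSup_le ⟨a, haA⟩ fun t ht => ht.1.2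
  have hbelow : ∀ t ∈ Ico a c, P t := fun t ht => by
    obtain ⟨s, hsA, hts⟩ := exists_lt_of_lt_csSup ⟨a, haA⟩ ht.2
    exact hsA.2 t ⟨ht.1, hts.le⟩
  have hcA : ∀ t ∈ Icc a c, P t := by
    intro t ht
    rcases ht.2.lt_or_eq with htc | rfl
    · exact hbelow t ⟨ht.1, htc⟩
    rcases hac.lt_or_eq with hac | hac
    · exact hlim _ ⟨hac, hcb⟩ hbelow
    · exact hac ▸ ha
  suffices hcb_eq : c = b from fun t ht => hcA t (hcb_eq ▸ ht)
  by_contra hne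
  have hclt : c < b := lt_of_le_of_ne hcb hne
  obtain ⟨u, hcu, hu⟩ := (mem_nhdsGT_iff_exists_Ioo_subset' hclt).1 (hstep c ⟨hac, hclt⟩ hcA)
  set u' := min u b
  have hu'A : u' ∈ A := by
    have hP : ∀ t ∈ Ico a u', P t := fun t ht =>
      (le_or_gt t c).elim (fun htc => hcA t ⟨ht.1, htc⟩)
        (fun hct => hu ⟨hct, ht.2.trans_le (min_le_left _ _)⟩)
    refine ⟨⟨hac.trans (le_min hcu.le hclt.le), min_le_right _ _⟩, fun t ht => ?_⟩
    rcases ht.2.lt_or_eq with htu | rfl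
    · exact hP t ⟨ht.1, htu⟩
    · exact hlim _ ⟨hac.trans_lt (lt_min hcu hclt), min_le_right _ _⟩ hP
  exact (lt_min hcu hclt).not_ge (le_csSup hbdd hu'A)

noncomputable def weightBelow {ι : Type*} (q w : ι → ℝ≥0∞) (m : ℝ≥0∞) : ℝ≥0∞ :=
  ∑' i, if q i < m then w i else 0

section weightBelow

variable {ι : Type*} (q w : ι → ℝ≥0∞)

theorem weightBelow_mono : Monotone (weightBelow q w) := fun m m' hm =>
  ENNReal.tsum_le_tsum fun i => by
    by_cases h : q i < m
    · simp [h, h.trans_le hm]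
    · simp [h]

theorem weightBelow_le_tsum (m : ℝ≥0∞) : weightBelow q w m ≤ ∑' i, w i :=
  ENNReal.tsum_le_tsum fun i => by split_ifs <;> simp

theorem weightBelow_add_le {i : ι} {m m' : ℝ≥0∞} (hm : ¬q i < m) (hm' : q i < m') :
    weightBelow q w m + w i ≤ weightBelow q w m' := by
  classical
  rw [weightBelow, ← tsum_ite_eq i w, ← ENNReal.tsum_add]
  refine ENNReal.tsum_le_tsum fun j => ?_
  rcases eq_or_ne j i with rfl | hji
  · simp [hm, hm']
  · have hmm' : m ≤ m' := (not_lt.1 hm).trans hm'.le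
    by_cases h : q j < m
    · simp [hji, h, h.trans_le hmm']
    · simp [hji, h]

end weightBelow

theorem ContinuousOn.tendsto_nhdsGT_of_mem_Ico {α β : Type*} [LinearOrder α]
    [TopologicalSpace α] [OrderTopology α] [TopologicalSpace β] {g : α → β} {a b c : α}
    (hg : ContinuousOn g (Icc a b)) (hc : c ∈ Ico a b) : Tendsto g (𝓝[>] c) (𝓝 (g c)) :=
  (hg c (Ico_subset_Icc_self hc)).mono_of_mem_nhdsWithin
    (mem_of_superset (Ioo_mem_nhdsGT hc.2) fun _ ht => ⟨hc.1.trans ht.1.le, ht.2.le⟩)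

theorem ContinuousOn.tendsto_nhdsLT_of_mem_Ioc {α β : Type*} [LinearOrder α]
    [TopologicalSpace α] [OrderTopology α] [TopologicalSpace β] {g : α → β} {a b c : α}
    (hg : ContinuousOn g (Icc a b)) (hc : c ∈ Ioc a b) : Tendsto g (𝓝[<] c) (𝓝 (g c)) :=
  (hg c (Ioc_subset_Icc_self hc)).mono_of_mem_nhdsWithin
    (mem_of_superset (Ioo_mem_nhdsLT hc.1) fun _ ht => ⟨ht.1.le, ht.2.le.trans hc.2⟩)

theorem Filter.Eventually.forall_Ioc_nhdsGT {α : Type*} [LinearOrder α] [TopologicalSpace α]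
    [OrderTopology α] [NoMaxOrder α] {c : α} {p : α → Prop} (h : ∀ᶠ s in 𝓝[>] c, p s) :
    ∀ᶠ t in 𝓝[>] c, ∀ s ∈ Ioc c t, p s := by
  obtain ⟨u, hcu, hu⟩ := mem_nhdsGT_iff_exists_Ioo_subset.1 h
  filter_upwards [Ioo_mem_nhdsGT hcu] with t ht s hs using hu ⟨hs.1, hs.2.trans_lt ht.2⟩

section budget

variable {Y : Type*} [PseudoEMetricSpace Y] {g : ℝ → Y} {v : ℝ → ℝ≥0∞} {K : Set Y}
  {w : K → ℝ≥0∞} {a b : ℝ}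

noncomputable def budget (g : ℝ → Y) (v : ℝ → ℝ≥0∞) (w : K → ℝ≥0∞) (a t : ℝ) : ℝ≥0∞ :=
  v t + weightBelow (fun k : K => edist (g a) k) w (⨆ s ∈ Icc a t, edist (g a) (g s))

theorem budget_mono (hv : Monotone v) : Monotone (budget g v w a) := fun _ _ hst =>
  add_le_add (hv hst) <| weightBelow_mono _ _ <| biSup_mono fun _ hu => ⟨hu.1, hu.2.trans hst⟩

theorem eventually_edist_add_le_budget (hg : ContinuousOn g (Icc a b)) (hv : Monotone v)
    (hw : ∀ k, 0 < w k)
    (hgood : ∀ t ∈ Ico a b, g t ∉ K → ∀ᶠ s in 𝓝[>] t, edist (g t) (g s) + v t ≤ v s)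
    {c : ℝ} (hc : c ∈ Ico a b)
    (hle : ∀ t ∈ Icc a c, edist (g a) (g t) + v a ≤ budget g v w a t) :
    ∀ᶠ t in 𝓝[>] c, edist (g a) (g t) + v a ≤ budget g v w a t := by
  have hgc := hg.tendsto_nhdsGT_of_mem_Ico hc
  have hlec := hle c ⟨hc.1, le_rfl⟩
  set M : ℝ → ℝ≥0∞ := fun t => ⨆ s ∈ Icc a t, edist (g a) (g s)
  set W := weightBelow (fun k : K => edist (g a) k) w
  by_cases hmax : edist (g a) (g c) < M c
  · obtain ⟨s, hs, hlt⟩ := lt_biSup_iff.1 hmax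
    filter_upwards [self_mem_nhdsWithin,
      (tendsto_const_nhds.edist hgc).eventually (gt_mem_nhds hlt)] with t hct hts
    calc edist (g a) (g t) + v a ≤ edist (g a) (g s) + v a := by gcongr
      _ ≤ budget g v w a s := hle s hs
      _ ≤ budget g v w a t := budget_mono hv (hs.2.trans hct.le)
  by_cases hK : g c ∈ K
  · filter_upwards [self_mem_nhdsWithin,
      hgc.eventually (Metric.eball_mem_nhds _ (hw ⟨g c, hK⟩))] with t hct hts
    by_cases hfar : edist (g a) (g t) ≤ edist (g a) (g c)
    · calc edist (g a) (g t) + v a ≤ edist (g a) (g c) + v a := by gcongr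
        _ ≤ budget g v w a c := hlec
        _ ≤ budget g v w a t := budget_mono hv hct.le
    have hgain : W (M c) + w ⟨g c, hK⟩ ≤ W (M t) :=
      weightBelow_add_le _ _ hmax <| (not_le.1 hfar).trans_le <|
        le_biSup (fun s => edist (g a) (g s)) ⟨hc.1.trans hct.le, le_rfl⟩
    calc edist (g a) (g t) + v a ≤ edist (g a) (g c) + v a + edist (g c) (g t) := by
          rw [add_right_comm]; gcongr; exact edist_triangle _ _ _
      _ ≤ v c + W (M c) + w ⟨g c, hK⟩ :=
          add_le_add hlec (Metric.mem_eball'.1 hts).le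
      _ ≤ v t + W (M t) := by rw [add_assoc]; gcongr; exact hv hct.le
  · filter_upwards [self_mem_nhdsWithin, hgood c hc hK] with t hct hts
    calc edist (g a) (g t) + v a ≤ edist (g a) (g c) + v a + edist (g c) (g t) := by
          rw [add_right_comm]; gcongr; exact edist_triangle _ _ _
      _ ≤ v c + W (M c) + edist (g c) (g t) := add_le_add_left hlec _
      _ = edist (g c) (g t) + v c + W (M c) := by ring
      _ ≤ v t + W (M t) := by
          gcongr
          exact weightBelow_mono _ _ (biSup_mono fun _ hu => ⟨hu.1, hu.2.trans hct.le⟩)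

end budget

theorem edist_add_le_of_eventually_le_off_countable {Y : Type*} [PseudoEMetricSpace Y]
    {g : ℝ → Y} {v : ℝ → ℝ≥0∞} {K : Set Y} {a b : ℝ} (hab : a ≤ b)
    (hg : ContinuousOn g (Icc a b)) (hv : Monotone v) (hK : K.Countable)
    (hgood : ∀ t ∈ Ico a b, g t ∉ K → ∀ᶠ s in 𝓝[>] t, edist (g t) (g s) + v t ≤ v s) :
    edist (g a) (g b) + v a ≤ v b := by
  refine ENNReal.le_of_forall_pos_le_add fun ε hε _ => ?_
  have := hK.to_subtype
  obtain ⟨w, hw, hwε⟩ := ENNReal.exists_pos_sum_of_countable' (ENNReal.coe_ne_zero.2 hε.ne') K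
  have key : ∀ t ∈ Icc a b, edist (g a) (g t) + v a ≤ budget g v w a t := by
    refine real_induction_Icc hab (by simp [budget]) (fun c hc hle => ?_)
      (fun c hc hle => eventually_edist_add_le_budget hg hv hw hgood hc hle)
    refine le_of_tendsto ((tendsto_const_nhds.edist (hg.tendsto_nhdsLT_of_mem_Ioc hc)).add_const
      (v a)) ?_
    filter_upwards [Ico_mem_nhdsLT hc.1] with t ht
    exact (hle t ht).trans (budget_mono hv ht.2.le)
  calc edist (g a) (g b) + v a ≤ budget g v w a b := key b ⟨hab, le_rfl⟩
    _ ≤ v b + ε := add_le_add_right ((weightBelow_le_tsum _ _ _).trans hwε.le) _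

theorem intrinsicMetric_le_eVariationOn {M : Type*} [PseudoEMetricSpace M] {E : Set M}
    {γ : ℝ → M} {a b : ℝ} (hab : a ≤ b) (hγ : ContinuousOn γ (Icc a b))
    (hE : MapsTo γ (Icc a b) E) :
    intrinsicMetric E (γ a) (γ b) ≤ eVariationOn γ (Icc a b) := by
  set ψ : ℝ → ℝ := ⇑(AffineMap.lineMap (k := ℝ) a b)
  have hψ : ψ '' Icc 0 1 = Icc a b := by rw [← segment_eq_image_lineMap, segment_eq_Icc hab]
  have hmaps : MapsTo ψ (Icc 0 1) (Icc a b) := hψ ▸ mapsTo_image _ _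
  calc intrinsicMetric E (γ a) (γ b) ≤ eVariationOn (γ ∘ ψ) (Icc 0 1) :=
        iInf_le_of_le (γ ∘ ψ) <|
          iInf_le_of_le (hγ.comp AffineMap.lineMap_continuous.continuousOn hmaps) <|
          iInf_le_of_le (hE.comp hmaps) <| iInf_le_of_le (by simp [ψ]) <|
          iInf_le_of_le (by simp [ψ]) le_rfl
    _ = eVariationOn γ (Icc a b) := by
        rw [eVariationOn.comp_eq_of_monotoneOn γ ψ ((AffineMap.lineMap_mono hab).monotoneOn _),
          hψ]

theorem edist_le_mul_eVariationOn_of_countable_closure {M Y : Type*} [PseudoEMetricSpace M]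
    [PseudoEMetricSpace Y] {Θ : Set M} {f : M → Y} (hf : Continuous f) {L : ℝ≥0}
    (hlip : ∀ x ∈ Θᶜ, ∀ y ∈ Θᶜ, edist (f x) (f y) ≤ (L : ℝ≥0∞) * intrinsicMetric Θᶜ x y)
    {γ : ℝ → M} {a b : ℝ} (hab : a ≤ b) (hγ : ContinuousOn γ (Icc a b))
    (hS : (closure (γ '' Icc a b ∩ Θ)).Countable) :
    edist (f (γ a)) (f (γ b)) ≤ L * eVariationOn γ (Icc a b) := by
  set S := closure (γ '' Icc a b ∩ Θ)
  have hv : Monotone fun t => (L : ℝ≥0∞) * eVariationOn γ (Icc a t) := fun _ _ hst =>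
    mul_le_mul_right (eVariationOn.mono γ (Icc_subset_Icc_right hst)) _
  refine le_self_add.trans <| edist_add_le_of_eventually_le_off_countable (g := f ∘ γ)
    hab (hf.comp_continuousOn hγ) hv (hS.image f) fun t ht hft => ?_
  have htS : γ t ∉ S := fun h => hft (mem_image_of_mem f h)
  have hnear : ∀ᶠ s in 𝓝[>] t, s ∈ Icc a b ∧ γ s ∉ S :=
    Filter.Eventually.and
      (mem_of_superset (Ioo_mem_nhdsGT ht.2)
        (Ioo_subset_Icc_self.trans (Icc_subset_Icc_left ht.1)))
      ((hγ.tendsto_nhdsGT_of_mem_Ico ht).eventually (isClosed_closure.isOpen_compl.mem_nhds htS))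
  filter_upwards [self_mem_nhdsWithin, hnear.forall_Ioc_nhdsGT] with s hts hs
  have hsub : Icc t s ⊆ Icc a b := Icc_subset_Icc ht.1 (hs s ⟨hts, le_rfl⟩).1.2
  have hclean : MapsTo γ (Icc t s) Θᶜ := by
    intro u hu hΘ
    have huS : γ u ∉ S := by
      rcases hu.1.eq_or_lt with rfl | htu
      exacts [htS, (hs u ⟨htu, hu.2⟩).2]
    exact huS (subset_closure ⟨mem_image_of_mem γ (hsub hu), hΘ⟩)
  have hadd := eVariationOn.Icc_add_Icc γ (s := univ) ht.1 hts.le (mem_univ t)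
  simp only [univ_inter] at hadd
  calc edist (f (γ t)) (f (γ s)) + L * eVariationOn γ (Icc a t)
      ≤ L * eVariationOn γ (Icc t s) + L * eVariationOn γ (Icc a t) := by
        gcongr
        exact (hlip _ (hclean ⟨le_rfl, hts.le⟩) _ (hclean ⟨hts.le, le_rfl⟩)).trans
          (by gcongr; exact intrinsicMetric_le_eVariationOn hts.le (hγ.mono hsub) hclean)
    _ = L * eVariationOn γ (Icc a s) := by rw [← mul_add, add_comm, hadd]

/-- Let `M` be a length space and `Θ ⊆ M` a permeable subset. Every
continuous `f : M → Y` which is intrinsically `L`-Lipschitz on `E = M \ Θ` is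
`L`-Lipschitz on all of `M`. -/
theorem permeable_removability
    {M Y : Type*} [MetricSpace M] [MetricSpace Y]
    (hlength : ∀ x y : M, intrinsicMetric Set.univ x y = edist x y)
    (Θ : Set M)
    (hperm : ∀ x y : M, thetaIntrinsicMetric Θ x y = intrinsicMetric Set.univ x y)
    (f : M → Y) (hf : Continuous f) (L : ℝ≥0)
    (hlip : ∀ x ∈ Θᶜ, ∀ y ∈ Θᶜ,
      edist (f x) (f y) ≤ (L : ℝ≥0∞) * intrinsicMetric Θᶜ x y) :
    LipschitzWith L f := by
  intro x y
  refine ENNReal.le_of_forall_pos_le_add fun ε hε _ => ?_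
  obtain ⟨δ, hδ, hLδ⟩ :=
    ENNReal.exists_pos_mul_lt ENNReal.coe_ne_top (ENNReal.coe_ne_zero.2 hε.ne')
  have hθ : thetaIntrinsicMetric Θ x y < edist x y + δ := by
    rw [hperm, hlength]
    exact ENNReal.lt_add_right (edist_ne_top x y) hδ.ne'
  simp only [thetaIntrinsicMetric, iInf_lt_iff] at hθ
  obtain ⟨γ, hγ, rfl, rfl, hS, hvar⟩ := hθ
  calc edist (f (γ 0)) (f (γ 1)) ≤ L * eVariationOn γ (Icc 0 1) :=
        edist_le_mul_eVariationOn_of_countable_closure hf hlip zero_le_one hγ hS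
    _ ≤ L * (edist (γ 0) (γ 1) + δ) := by gcongr
    _ ≤ L * edist (γ 0) (γ 1) + ε := by rw [mul_add]; gcongr; rw [mul_comm]; exact hLδ.le
end
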